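/- In Q_n, with y_i = z_{{1,...,i-1},i}, the element Λ_k({1,...,n}) equals the sum ∑_{n ≥ i_1 > i_2 > ... > i_k ≥ 1} y_{i_1}·y_{i_2}·...·y_{i_k}. -/

import Mathlib

/-!
The additive relations make `r(A)` independent of the order in which `A` is built up, so
`r(A ∪ {a}) - r(A) = z_{A,a}`. With the multiplicative relations, two consecutive steps of the
recursion for `Λ` then commute, so `Λ(A)` is order independent as well and
`Λ_{m+1}(A ∪ {a}) = Λ_{m+1}(A) + z_{A,a} Λ_m(A)` for every `a ∉ A`. Adding the elements of `A` in
increasing order and unrolling this recursion writes `Λ_m(A)` as the sum, over `m`-subsets `S ⊆ A`,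
of the products of the `z_{{j ∈ A | j < i}, i}` over `i ∈ S` in decreasing order; for
`A = {1,…,n}` these factors are the `y_i`.
-/

namespace QnPaper

/-- The defining relations of the quadratic algebra `Q_n`:
for `A ⊆ {1,…,n}` and distinct `i, j ∉ A`,
`z_{A∪{i},j} + z_{A,i} = z_{A∪{j},i} + z_{A,j}` and
`z_{A∪{i},j} * z_{A,i} = z_{A∪{j},i} * z_{A,j}`. -/
inductive QRel (k : Type) [Field k] (n : ℕ) :
    FreeAlgebra k (Finset (Fin n) × Fin n) → FreeAlgebra k (Finset (Fin n) × Fin n) → Prop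
  | add_rel (A : Finset (Fin n)) (i j : Fin n) (hi : i ∉ A) (hj : j ∉ A) (hij : i ≠ j) :
      QRel k n (FreeAlgebra.ι k (insert i A, j) + FreeAlgebra.ι k (A, i))
        (FreeAlgebra.ι k (insert j A, i) + FreeAlgebra.ι k (A, j))
  | mul_rel (A : Finset (Fin n)) (i j : Fin n) (hi : i ∉ A) (hj : j ∉ A) (hij : i ≠ j) :
      QRel k n (FreeAlgebra.ι k (insert i A, j) * FreeAlgebra.ι k (A, i))
        (FreeAlgebra.ι k (insert j A, i) * FreeAlgebra.ι k (A, j))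

/-- The quadratic algebra `Q_n`. -/
abbrev Q (k : Type) [Field k] (n : ℕ) := RingQuot (QRel k n)

/-- The generator `z_{A,i}` of `Q_n` (only meaningful when `i ∉ A`). -/
def z (k : Type) [Field k] (n : ℕ) (A : Finset (Fin n)) (i : Fin n) : Q k n :=
  RingQuot.mkAlgHom k (QRel k n) (FreeAlgebra.ι k (A, i))

/-- `rAux s [i₁,…,i_r] = z_{s,i₁} + z_{s∪{i₁},i₂} + ⋯`. -/
def rAux (k : Type) [Field k] (n : ℕ) (s : Finset (Fin n)) : List (Fin n) → Q k n
  | [] => 0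
  | a :: l => z k n s a + rAux k n (insert a s) l

/-- `r(A) = z_{A,∅}`, computed using the increasing ordering of `A`. -/
def rFin (k : Type) [Field k] (n : ℕ) (A : Finset (Fin n)) : Q k n :=
  rAux k n ∅ (A.sort (· ≤ ·))

/-- `u(B) = z_{∅,B} = ∑_{D ⊆ B} (-1)^{|B|-|D|} r(D)`. -/
def uFin (k : Type) [Field k] (n : ℕ) (B : Finset (Fin n)) : Q k n :=
  ∑ D ∈ B.powerset, (-1 : Q k n) ^ (B.card - D.card) * rFin k n D
/-- `Λ_m` built along a list: `Λ_0 = 1`, `Λ_m(∅) = 0` for `m ≥ 1`, and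
`Λ_m(A∪{a}) = Λ_m(A) + (Λ_1(A∪{a}) - Λ_1(A))·Λ_{m-1}(A)`, where `Λ_1 = r`. -/
def LamL (k : Type) [Field k] (n : ℕ) : ℕ → List (Fin n) → Q k n
  | 0, _ => 1
  | _ + 1, [] => 0
  | m + 1, a :: l =>
      LamL k n (m + 1) l
        + (rFin k n (insert a l.toFinset) - rFin k n l.toFinset) * LamL k n m l

/-- `Λ_m(A)`, computed by adding the elements of `A` in increasing order. -/
def Lam (k : Type) [Field k] (n : ℕ) (m : ℕ) (A : Finset (Fin n)) : Q k n :=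
  LamL k n m (A.sort (· ≤ ·))
/-- `y_i = z_{{1,…,i-1},i}`. -/
def y (k : Type) [Field k] (n : ℕ) (i : Fin n) : Q k n := z k n (Finset.Iio i) i

theorem _root_.Finset.reverse_sort {α : Type*} [LinearOrder α] (s : Finset α) :
    (s.sort (· ≤ ·)).reverse = s.sort (· ≥ ·) :=
  List.Perm.eq_of_pairwise' (List.pairwise_reverse.2 (Finset.pairwise_sort s _))
    (Finset.pairwise_sort s _) ((List.reverse_perm _).trans
      ((Finset.sort_perm_toList s _).trans (Finset.sort_perm_toList s _).symm))

theorem _root_.Finset.sum_powersetCard_succ_insert {α M : Type*} [DecidableEq α]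
    [AddCommMonoid M] {A : Finset α} {b : α} (hb : b ∉ A) (m : ℕ) (f : Finset α → M) :
    ∑ S ∈ (insert b A).powersetCard (m + 1), f S
      = ∑ S ∈ A.powersetCard (m + 1), f S + ∑ T ∈ A.powersetCard m, f (insert b T) := by
  have hbT {T : Finset α} (hT : T ∈ A.powersetCard m) : b ∉ T :=
    fun h => hb ((Finset.mem_powersetCard.1 hT).1 h)
  have hdisj : Disjoint (A.powersetCard (m + 1)) ((A.powersetCard m).image (insert b)) := by
    refine Finset.disjoint_left.2 fun S hS hS' => ?_
    obtain ⟨T, -, rfl⟩ := Finset.mem_image.1 hS'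
    exact hb ((Finset.mem_powersetCard.1 hS).1 (Finset.mem_insert_self b T))
  rw [Finset.powersetCard_succ_insert hb, Finset.sum_union hdisj, Finset.sum_image]
  intro T hT T' hT' h
  rw [← Finset.erase_insert (hbT hT), h, Finset.erase_insert (hbT hT')]

variable {k : Type} [Field k] {n : ℕ}

theorem z_insert_add_z {A : Finset (Fin n)} {i j : Fin n} (hi : i ∉ A) (hj : j ∉ A) (hij : i ≠ j) :
    z k n (insert i A) j + z k n A i = z k n (insert j A) i + z k n A j := by
  simpa only [z, map_add] using RingQuot.mkAlgHom_rel k (QRel.add_rel A i j hi hj hij)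

theorem z_insert_mul_z {A : Finset (Fin n)} {i j : Fin n} (hi : i ∉ A) (hj : j ∉ A) (hij : i ≠ j) :
    z k n (insert i A) j * z k n A i = z k n (insert j A) i * z k n A j := by
  simpa only [z, map_mul] using RingQuot.mkAlgHom_rel k (QRel.mul_rel A i j hi hj hij)

theorem rAux_perm {L L' : List (Fin n)} (h : L.Perm L') :
    ∀ s : Finset (Fin n), L.Nodup → (∀ b ∈ L, b ∉ s) → rAux k n s L = rAux k n s L' := by
  induction h with
  | nil => exact fun _ _ _ => rfl
  | cons x _ ih =>
    intro s hnd hdisj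
    rw [List.nodup_cons] at hnd
    simp only [rAux]
    rw [ih _ hnd.2 fun b hb => ?_]
    simpa [not_or] using ⟨fun hbx => hnd.1 (hbx ▸ hb), hdisj b (List.mem_cons_of_mem _ hb)⟩
  | swap x y L =>
    intro s hnd hdisj
    have hxy : y ≠ x := by rintro rfl; simp at hnd
    have hrel := z_insert_add_z (k := k) (hdisj y (by simp)) (hdisj x (by simp)) hxy
    simp only [rAux, Finset.insert_comm x y]
    linear_combination (norm := abel) hrel
  | trans h₁ _ ih₁ ih₂ =>
    intro s hnd hdisj
    rw [ih₁ s hnd hdisj, ih₂ s (h₁.nodup_iff.mp hnd) fun b hb => hdisj b (h₁.mem_iff.mpr hb)]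

theorem rAux_append_singleton (L : List (Fin n)) (s : Finset (Fin n)) (a : Fin n) :
    rAux k n s (L ++ [a]) = rAux k n s L + z k n (s ∪ L.toFinset) a := by
  induction L generalizing s with
  | nil => simp [rAux]
  | cons b L ih =>
    simp only [List.cons_append, rAux, ih, add_assoc, List.toFinset_cons, Finset.union_insert,
      Finset.insert_union]

theorem rFin_eq_rAux {A : Finset (Fin n)} {L : List (Fin n)} (hL : L.Nodup)
    (hA : L.toFinset = A) : rFin k n A = rAux k n ∅ L :=
  rAux_perm (List.perm_of_nodup_nodup_toFinset_eq (Finset.sort_nodup _ _) hL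
    (by rw [Finset.sort_toFinset, hA])) ∅ (Finset.sort_nodup _ _) (by simp)

theorem rFin_insert {A : Finset (Fin n)} {a : Fin n} (ha : a ∉ A) :
    rFin k n (insert a A) = rFin k n A + z k n A a := by
  have hnd : (A.sort (· ≤ ·) ++ [a]).Nodup := by
    simp only [List.nodup_append, Finset.sort_nodup, List.nodup_singleton, List.mem_singleton,
      Finset.mem_sort, true_and]
    rintro b hb _ rfl rfl
    exact ha hb
  rw [rFin_eq_rAux hnd (by ext; simp),
    rAux_append_singleton, rFin, Finset.empty_union, Finset.sort_toFinset]

theorem LamL_succ_cons {L : List (Fin n)} {a : Fin n} (ha : a ∉ L) (m : ℕ) :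
    LamL k n (m + 1) (a :: L) = LamL k n (m + 1) L + z k n L.toFinset a * LamL k n m L := by
  rw [LamL, rFin_insert (by simpa using ha), add_sub_cancel_left]

/-- The linear terms are exchanged by the additive relation, the quadratic term by the
multiplicative one. -/
theorem LamL_cons_cons_comm {L : List (Fin n)} {x y : Fin n} (hxy : x ≠ y) (hx : x ∉ L)
    (hy : y ∉ L) (m : ℕ) : LamL k n m (x :: y :: L) = LamL k n m (y :: x :: L) := by
  have hx' : x ∉ L.toFinset := by simpa using hx
  have hy' : y ∉ L.toFinset := by simpa using hy
  have hadd := z_insert_add_z (k := k) hy' hx' hxy.symm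
  cases m with
  | zero => rfl
  | succ m =>
    rw [LamL_succ_cons (L := y :: L) (by simp [hxy, hx]),
      LamL_succ_cons (L := x :: L) (by simp [hxy.symm, hy]), List.toFinset_cons, List.toFinset_cons]
    cases m with
    | zero =>
      rw [LamL_succ_cons hx, LamL_succ_cons hy]
      simp only [LamL, mul_one]
      linear_combination (norm := abel) hadd
    | succ m =>
      have hmul := z_insert_mul_z (k := k) hy' hx' hxy.symm
      rw [LamL_succ_cons hx, LamL_succ_cons hy, LamL_succ_cons hx m, LamL_succ_cons hy m,
        mul_add, mul_add, ← mul_assoc, ← mul_assoc, hmul]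
      have hX : z k n L.toFinset y * LamL k n (m + 1) L
          + z k n (insert y L.toFinset) x * LamL k n (m + 1) L
          = z k n L.toFinset x * LamL k n (m + 1) L
          + z k n (insert x L.toFinset) y * LamL k n (m + 1) L := by
        rw [← add_mul, ← add_mul, add_comm, hadd, add_comm]
      linear_combination (norm := abel) hX

theorem LamL_perm {L L' : List (Fin n)} (h : L.Perm L') (hL : L.Nodup) (m : ℕ) :
    LamL k n m L = LamL k n m L' := by
  induction h generalizing m with
  | nil => rfl
  | cons x h ih =>
    cases m with
    | zero => rfl
    | succ m =>
      have hnd := List.nodup_cons.mp hL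
      rw [LamL_succ_cons hnd.1, LamL_succ_cons (h.mem_iff.not.mp hnd.1), ih hnd.2, ih hnd.2,
        List.toFinset_eq_of_perm _ _ h]
  | swap x y L =>
    obtain ⟨hyx, hyL⟩ : y ≠ x ∧ y ∉ L := by simpa using (List.nodup_cons.mp hL).1
    exact LamL_cons_cons_comm hyx hyL (List.nodup_cons.mp (List.nodup_cons.mp hL).2).1 m
  | trans h₁ _ ih₁ ih₂ => rw [ih₁ hL, ih₂ (h₁.nodup_iff.mp hL)]

theorem Lam_succ_insert {A : Finset (Fin n)} {a : Fin n} (ha : a ∉ A) (m : ℕ) :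
    Lam k n (m + 1) (insert a A) = Lam k n (m + 1) A + z k n A a * Lam k n m A := by
  have hperm : ((insert a A).sort (· ≤ ·)).Perm (a :: A.sort (· ≤ ·)) :=
    List.perm_of_nodup_nodup_toFinset_eq (Finset.sort_nodup _ _)
      (List.nodup_cons.mpr ⟨by simpa using ha, Finset.sort_nodup _ _⟩) (by simp)
  rw [Lam, LamL_perm hperm (Finset.sort_nodup _ _), LamL_succ_cons (by simpa using ha),
    Finset.sort_toFinset, Lam, Lam]

variable (k) in
def orderedMonomial (A S : Finset (Fin n)) : Q k n :=
  ((S.sort (· ≥ ·)).map fun i => z k n {j ∈ A | j < i} i).prod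

theorem orderedMonomial_insert_of_subset {A S : Finset (Fin n)} {b : Fin n}
    (hb : ∀ x ∈ A, x < b) (hS : S ⊆ A) :
    orderedMonomial k (insert b A) S = orderedMonomial k A S := by
  refine congrArg List.prod (List.map_congr_left fun i hi => ?_)
  rw [Finset.filter_insert, if_neg (hb i (hS ((Finset.mem_sort _).1 hi))).asymm]

theorem orderedMonomial_insert_insert {A T : Finset (Fin n)} {b : Fin n}
    (hb : ∀ x ∈ A, x < b) (hT : T ⊆ A) :
    orderedMonomial k (insert b A) (insert b T) = z k n A b * orderedMonomial k A T := by
  have hbT : b ∉ T := fun h => lt_irrefl b (hb b (hT h))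
  rw [orderedMonomial, Finset.sort_insert _ (fun x hx => (hb x (hT hx)).le) hbT, List.map_cons,
    List.prod_cons, ← orderedMonomial, orderedMonomial_insert_of_subset hb hT,
    Finset.filter_insert, if_neg (lt_irrefl b), Finset.filter_true_of_mem hb]

theorem Lam_eq_sum_orderedMonomial (A : Finset (Fin n)) (m : ℕ) :
    Lam k n m A = ∑ S ∈ A.powersetCard m, orderedMonomial k A S := by
  induction A using Finset.induction_on_max generalizing m with
  | empty =>
    cases m with
    | zero => simp [Lam, LamL, orderedMonomial]
    | succ m =>
      rw [(Finset.powersetCard_eq_empty (s := (∅ : Finset (Fin n)))).2 (by simp)]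
      simp [Lam, LamL]
  | insert b A hb ih =>
    cases m with
    | zero => simp [Lam, LamL, orderedMonomial]
    | succ m =>
      have hbA : b ∉ A := fun h => lt_irrefl b (hb b h)
      rw [Lam_succ_insert hbA, ih, ih, Finset.sum_powersetCard_succ_insert hbA, Finset.mul_sum]
      congr 1
      · exact Finset.sum_congr rfl fun S hS =>
          (orderedMonomial_insert_of_subset hb (Finset.mem_powersetCard.1 hS).1).symm
      · exact Finset.sum_congr rfl fun T hT =>
          (orderedMonomial_insert_insert hb (Finset.mem_powersetCard.1 hT).1).symm

/-- `Λ_m({1,…,n}) = ∑_{i₁ > i₂ > ⋯ > i_m} y_{i₁}·y_{i₂}⋯y_{i_m}`. -/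
theorem stmt12 (k : Type) [Field k] (n : ℕ) (m : ℕ) :
    Lam k n m Finset.univ
      = ∑ S ∈ Finset.powersetCard m (Finset.univ : Finset (Fin n)),
          ((S.sort (· ≤ ·)).reverse.map (y k n)).prod := by
  rw [Lam_eq_sum_orderedMonomial]
  refine Finset.sum_congr rfl fun S _ => ?_
  simp only [orderedMonomial, Finset.reverse_sort, Finset.filter_gt_eq_Iio]
  rfl
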